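/- Let G be a graph with edge lengths ℓ and β ≥ 0. A set C ⊆ E is a (1,β)-contraction (i.e., dist_{ℓ_C}(u,v) ≥ dist_ℓ(u,v) − β for all u,v) if and only if dist_{ℓ_C}(u,v) ≥ dist_ℓ(u,v) − β holds for all pairs u,v such that every shortest path with respect to ℓ_C between u and v both starts and ends with an edge of C. -/
import Mathlib

open Classical

noncomputable def walkLen {V : Type*} (G : SimpleGraph V) (ℓ : Sym2 V → ℝ)
    {u v : V} (w : G.Walk u v) : ℝ := (w.edges.map ℓ).sum

noncomputable def gdist {V : Type*} (G : SimpleGraph V) (ℓ : Sym2 V → ℝ) (u v : V) : ℝ :=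
  sInf {x : ℝ | ∃ w : G.Walk u v, walkLen G ℓ w = x}

noncomputable def zeroOn {V : Type*} (ℓ : Sym2 V → ℝ) (C : Set (Sym2 V)) : Sym2 V → ℝ :=
  fun e => if e ∈ C then 0 else ℓ e

namespace AddContrAux

open SimpleGraph SimpleGraph.Walk

variable {V : Type*} {G : SimpleGraph V} {ℓ' : Sym2 V → ℝ}

lemma walkLen_nonneg (hnn : ∀ e ∈ G.edgeSet, 0 ≤ ℓ' e)
    {u v : V} (w : G.Walk u v) : 0 ≤ walkLen G ℓ' w := by
  apply List.sum_nonneg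
  intro x hx
  obtain ⟨e, he, rfl⟩ := List.mem_map.mp hx
  exact hnn e (w.edges_subset_edgeSet he)

lemma walkLen_nil {u : V} : walkLen G ℓ' (Walk.nil : G.Walk u u) = 0 := by
  simp [walkLen]

lemma walkLen_cons {u v w : V} (h : G.Adj u v) (p : G.Walk v w) :
    walkLen G ℓ' (Walk.cons h p) = ℓ' s(u, v) + walkLen G ℓ' p := by
  simp [walkLen]

lemma walkLen_append {u v w : V} (p : G.Walk u v) (q : G.Walk v w) :
    walkLen G ℓ' (p.append q) = walkLen G ℓ' p + walkLen G ℓ' q := by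
  simp [walkLen]

lemma walkLen_reverse {u v : V} (p : G.Walk u v) :
    walkLen G ℓ' p.reverse = walkLen G ℓ' p := by
  simp [walkLen, List.sum_reverse]

lemma distSet_nonempty (hconn : G.Connected) (u v : V) :
    {x : ℝ | ∃ w : G.Walk u v, walkLen G ℓ' w = x}.Nonempty := by
  obtain ⟨w⟩ := hconn u v
  exact ⟨walkLen G ℓ' w, w, rfl⟩

lemma distSet_bdd (hnn : ∀ e ∈ G.edgeSet, 0 ≤ ℓ' e) (u v : V) :
    BddBelow {x : ℝ | ∃ w : G.Walk u v, walkLen G ℓ' w = x} := by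
  refine ⟨0, ?_⟩
  rintro x ⟨w, rfl⟩
  exact walkLen_nonneg hnn w

lemma gdist_le (hnn : ∀ e ∈ G.edgeSet, 0 ≤ ℓ' e) {u v : V} (w : G.Walk u v) :
    gdist G ℓ' u v ≤ walkLen G ℓ' w :=
  csInf_le (distSet_bdd hnn u v) ⟨w, rfl⟩

lemma gdist_nonneg (hnn : ∀ e ∈ G.edgeSet, 0 ≤ ℓ' e) (hconn : G.Connected) (u v : V) :
    0 ≤ gdist G ℓ' u v := by
  apply le_csInf (distSet_nonempty hconn u v)
  rintro x ⟨w, rfl⟩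
  exact walkLen_nonneg hnn w

lemma gdist_le_add (hnn : ∀ e ∈ G.edgeSet, 0 ≤ ℓ' e) (hconn : G.Connected)
    {u b v : V} (h : G.Adj u b) :
    gdist G ℓ' u v ≤ ℓ' s(u, b) + gdist G ℓ' b v := by
  have key : gdist G ℓ' u v - ℓ' s(u, b) ≤ gdist G ℓ' b v := by
    apply le_csInf (distSet_nonempty hconn b v)
    rintro x ⟨w, rfl⟩
    have := gdist_le hnn (Walk.cons h w)
    rw [walkLen_cons] at this
    linarith
  linarith

lemma gdist_comm (u v : V) : gdist G ℓ' u v = gdist G ℓ' v u := by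
  unfold gdist
  congr 1
  ext x
  constructor
  · rintro ⟨w, rfl⟩; exact ⟨w.reverse, walkLen_reverse w⟩
  · rintro ⟨w, rfl⟩; exact ⟨w.reverse, walkLen_reverse w⟩

lemma exists_path_le (hnn : ∀ e ∈ G.edgeSet, 0 ≤ ℓ' e) :
    ∀ {u v : V} (w : G.Walk u v), ∃ p : G.Walk u v, p.IsPath ∧ walkLen G ℓ' p ≤ walkLen G ℓ' w := by
  intro u v w
  induction w with
  | nil => exact ⟨Walk.nil, Walk.IsPath.nil, le_rfl⟩
  | @cons a b c h w ih =>
    obtain ⟨p, hp, hle⟩ := ih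
    have hedge : (0:ℝ) ≤ ℓ' s(a, b) := hnn _ h
    by_cases hmem : a ∈ p.support
    · refine ⟨p.dropUntil a hmem, hp.dropUntil hmem, ?_⟩
      have hsplit := p.take_spec hmem
      have : walkLen G ℓ' (p.takeUntil a hmem) + walkLen G ℓ' (p.dropUntil a hmem)
          = walkLen G ℓ' p := by
        rw [← walkLen_append, hsplit]
      have htn : 0 ≤ walkLen G ℓ' (p.takeUntil a hmem) := walkLen_nonneg hnn _
      rw [walkLen_cons]
      linarith
    · refine ⟨Walk.cons h p, hp.cons hmem, ?_⟩
      rw [walkLen_cons, walkLen_cons]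
      linarith

lemma exists_shortest [Fintype V] (hnn : ∀ e ∈ G.edgeSet, 0 ≤ ℓ' e) (hconn : G.Connected)
    (u v : V) : ∃ p : G.Walk u v, p.IsPath ∧ walkLen G ℓ' p = gdist G ℓ' u v := by
  classical
  have : DecidableEq V := Classical.decEq V
  have : DecidableRel G.Adj := Classical.decRel _
  let S : Finset ℝ := (Finset.univ : Finset (G.Path u v)).image (fun p => walkLen G ℓ' p.val)
  have hSne : S.Nonempty := by
    obtain ⟨w⟩ := hconn u v
    exact ⟨walkLen G ℓ' w.bypass, Finset.mem_image.mpr ⟨⟨w.bypass, w.bypass_isPath⟩,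
      Finset.mem_univ _, rfl⟩⟩
  obtain ⟨p₀, _, hp₀⟩ := Finset.mem_image.mp (S.min'_mem hSne)
  refine ⟨p₀.val, p₀.prop, le_antisymm ?_ (gdist_le hnn _)⟩
  rw [hp₀]
  apply le_csInf (distSet_nonempty hconn u v)
  rintro x ⟨w, rfl⟩
  obtain ⟨p, hp, hle⟩ := exists_path_le hnn w
  refine le_trans (S.min'_le _ ?_) hle
  exact Finset.mem_image.mpr ⟨⟨p, hp⟩, Finset.mem_univ _, rfl⟩

end AddContrAux

open AddContrAux SimpleGraph SimpleGraph.Walk in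
theorem additive_contraction_criterion {V : Type*} [Fintype V] (G : SimpleGraph V)
    (hconn : G.Connected) (ℓ : Sym2 V → ℝ) (hℓ : ∀ e ∈ G.edgeSet, 0 < ℓ e)
    (β : ℝ) (hβ : 0 ≤ β) (C : Set (Sym2 V)) (hC : C ⊆ G.edgeSet) :
    (∀ u v : V, gdist G ℓ u v - β ≤ gdist G (zeroOn ℓ C) u v) ↔
    (∀ u v : V,
      (∀ p : G.Walk u v, p.IsPath →
        walkLen G (zeroOn ℓ C) p = gdist G (zeroOn ℓ C) u v →
        (∃ e ∈ C, p.edges.head? = some e) ∧ (∃ e ∈ C, p.edges.getLast? = some e)) →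
      gdist G ℓ u v - β ≤ gdist G (zeroOn ℓ C) u v) := by
  classical
  set ℓC := zeroOn ℓ C with hℓCdef
  have hnnℓ : ∀ e ∈ G.edgeSet, 0 ≤ ℓ e := fun e he => (hℓ e he).le
  have hnnC : ∀ e ∈ G.edgeSet, 0 ≤ ℓC e := by
    intro e he
    simp only [hℓCdef, zeroOn]
    split
    · exact le_rfl
    · exact (hℓ e he).le
  constructor
  · intro H u v _
    exact H u v
  · intro H
    -- trim lemma: drop a non-C first edge of a shortest walk
    have trim : ∀ (a b c : V) (h : G.Adj a b) (w : G.Walk b c),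
        walkLen G ℓC (Walk.cons h w) = gdist G ℓC a c → s(a, b) ∉ C →
        gdist G ℓC b c = gdist G ℓC a c - ℓ s(a, b) := by
      intro a b c h w hlen hnCe
      have he : ℓC s(a, b) = ℓ s(a, b) := if_neg hnCe
      have h1 : gdist G ℓC b c ≤ walkLen G ℓC w := gdist_le hnnC w
      have h2 : gdist G ℓC a c ≤ ℓC s(a, b) + gdist G ℓC b c := gdist_le_add hnnC hconn h
      rw [walkLen_cons, he] at hlen
      linarith
    let T : Finset ℝ := Finset.image (fun p : V × V => gdist G ℓC p.1 p.2) Finset.univ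
    have hTmem : ∀ a b : V, gdist G ℓC a b ∈ T :=
      fun a b => Finset.mem_image.mpr ⟨(a, b), Finset.mem_univ _, rfl⟩
    have hmeas : ∀ a b a' b' : V, gdist G ℓC a' b' < gdist G ℓC a b →
        (T.filter (fun t => t < gdist G ℓC a' b')).card <
        (T.filter (fun t => t < gdist G ℓC a b)).card := by
      intro a b a' b' hlt
      apply Finset.card_lt_card
      constructor
      · intro t ht
        rw [Finset.mem_filter] at ht ⊢
        exact ⟨ht.1, lt_trans ht.2 hlt⟩
      · intro hsub
        have : gdist G ℓC a' b' ∈ T.filter (fun t => t < gdist G ℓC a' b') :=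
          hsub (Finset.mem_filter.mpr ⟨hTmem a' b', hlt⟩)
        exact absurd (Finset.mem_filter.mp this).2 (lt_irrefl _)
    have main : ∀ n : ℕ, ∀ u v : V,
        (T.filter (fun t => t < gdist G ℓC u v)).card ≤ n →
        gdist G ℓ u v - β ≤ gdist G ℓC u v := by
      intro n
      induction n using Nat.strong_induction_on with
      | _ n IH =>
      intro u v hcard
      by_cases huv : u = v
      · subst huv
        have h1 : gdist G ℓ u u ≤ 0 := by
          have := gdist_le hnnℓ (Walk.nil : G.Walk u u)
          rwa [walkLen_nil] at this
        have h2 : 0 ≤ gdist G ℓC u u := gdist_nonneg hnnC hconn u u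
        linarith
      · by_cases hall : (∀ p : G.Walk u v, p.IsPath →
            walkLen G ℓC p = gdist G ℓC u v →
            (∃ e ∈ C, p.edges.head? = some e) ∧ (∃ e ∈ C, p.edges.getLast? = some e))
        · exact H u v hall
        · rw [not_forall] at hall
          obtain ⟨q, hq⟩ := hall
          rw [Classical.not_imp, Classical.not_imp] at hq
          obtain ⟨hqpath, hqlen, hbad⟩ := hq
          obtain ⟨b, hadj, w, rfl⟩ := Walk.exists_eq_cons_of_ne huv q
          rcases not_and_or.mp hbad with hA | hB
          · -- first edge not in C
            have hnCe : s(u, b) ∉ C := by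
              intro hc
              exact hA ⟨s(u, b), hc, by simp⟩
            have heq := trim u b v hadj w hqlen hnCe
            have hpos : 0 < ℓ s(u, b) := hℓ _ hadj
            have hlt : gdist G ℓC b v < gdist G ℓC u v := by rw [heq]; linarith
            have hrec : gdist G ℓ b v - β ≤ gdist G ℓC b v := by
              refine IH _ (lt_of_lt_of_le (hmeas u v b v hlt) hcard) b v le_rfl
            have htri : gdist G ℓ u v ≤ ℓ s(u, b) + gdist G ℓ b v :=
              gdist_le_add hnnℓ hconn hadj
            linarith
          · -- last edge not in C: work with the reverse walk
            have hrlen : walkLen G ℓC (Walk.cons hadj w).reverse = gdist G ℓC v u := by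
              rw [walkLen_reverse, hqlen, gdist_comm]
            have hvu : v ≠ u := fun hh => huv hh.symm
            obtain ⟨b', hadj', w', hrEq⟩ :=
              Walk.exists_eq_cons_of_ne hvu (Walk.cons hadj w).reverse
            have hlast : (Walk.cons hadj w).edges.getLast? = some s(v, b') := by
              rw [← List.head?_reverse, ← Walk.edges_reverse, hrEq]
              simp
            have hnCe : s(v, b') ∉ C := by
              intro hc
              exact hB ⟨s(v, b'), hc, hlast⟩
            rw [hrEq] at hrlen
            have heq := trim v b' u hadj' w' hrlen hnCe
            have hpos : 0 < ℓ s(v, b') := hℓ _ hadj'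
            have hcomm : gdist G ℓC v u = gdist G ℓC u v := gdist_comm v u
            have hlt : gdist G ℓC b' u < gdist G ℓC u v := by
              rw [heq, hcomm]; linarith
            have hrec : gdist G ℓ b' u - β ≤ gdist G ℓC b' u := by
              refine IH _ (lt_of_lt_of_le (hmeas u v b' u hlt) hcard) b' u le_rfl
            have htri : gdist G ℓ v u ≤ ℓ s(v, b') + gdist G ℓ b' u :=
              gdist_le_add hnnℓ hconn hadj'
            have hcommℓ : gdist G ℓ u v = gdist G ℓ v u := gdist_comm u v
            linarith
    intro u v
    exact main _ u v le_rfl
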